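/- arXiv:1211.3022 — 2 statements merged into one kernel-verified Lean document; each statement's English description precedes it below -/
import Mathlib

section
/- Let g : I → ℝ be continuous on an open interval I ⊂ ℝ and right-hand-side differentiable at every point, let [x₁,x₂] ⊂ I, and suppose ∫_{x₁}^{x₂} g'₊(ξ) dξ exists and is finite. Then ∫_{x₁}^{x₂} g'₊(ξ) dξ = g(x₂) - g(x₁). -/
open MeasureTheory

/-- Fundamental theorem of calculus for right-hand-side derivatives
(a result due to Lebesgue, originally for Dini derivatives). -/
theorem stmt_2 (I : Set ℝ) (hI : IsOpen I) (g g' : ℝ → ℝ)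
    (hcont : ContinuousOn g I)
    (hderiv : ∀ x ∈ I, Filter.Tendsto (fun h : ℝ => (g (x + h) - g x) / h)
      (nhdsWithin 0 (Set.Ioi 0)) (nhds (g' x)))
    (x₁ x₂ : ℝ) (hle : x₁ ≤ x₂) (hsub : Set.Icc x₁ x₂ ⊆ I)
    (hint : IntervalIntegrable g' volume x₁ x₂) :
    ∫ ξ in x₁..x₂, g' ξ = g x₂ - g x₁ := by
  apply intervalIntegral.integral_eq_sub_of_hasDeriv_right_of_le hle
    (hcont.mono hsub) _ hint
  intro x hx
  have hxI : x ∈ I := hsub (Set.Ioo_subset_Icc_self hx)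
  rw [hasDerivWithinAt_iff_tendsto_slope]
  have hdiff : Set.Ioi x \ {x} = Set.Ioi x := by
    ext y; simp [lt_irrefl, fun h : x < y => ne_of_gt h]
  rw [hdiff]
  have hmap' : Filter.Tendsto (fun y => y - x) (nhdsWithin x (Set.Ioi x))
      (nhdsWithin 0 (Set.Ioi 0)) := by
    apply tendsto_nhdsWithin_of_tendsto_nhds_of_eventually_within
    · simpa using ((continuous_sub_right x).tendsto x).mono_left nhdsWithin_le_nhds
    · filter_upwards [self_mem_nhdsWithin] with y hy
      simpa using hy
  refine ((hderiv x hxI).comp hmap').congr fun y => ?_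
  simp [Function.comp, slope_def_field, div_eq_div_iff]
end

section
/- Let g : 𝔖 → ℝ be affine on the simplex 𝔖 = co(x̃₀,…,x̃_{n+1}) (so g(Σλ_k x̃_k) = Σλ_k g(x̃_k) for convex coefficients) and let h : 𝔖 → ℝ be C¹ on a neighborhood of 𝔖. Then for x̃ = Σ_k λ_k x̃_k ∈ 𝔖, |g(x̃)h(x̃) − Σ_k λ_k g(x̃_k)h(x̃_k)| ≤ max_{z̃∈𝔖}‖∇h(z̃)‖₁ · diam(𝔖) · max_k |g(x̃_k)|. -/
/-- Interpolation error of a product of an affine function `g` and a `C¹` function `h`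
on a simplex. -/
theorem stmt_12 (n : ℕ) (g : EuclideanSpace ℝ (Fin (n + 1)) →ᵃ[ℝ] ℝ)
    (h : EuclideanSpace ℝ (Fin (n + 1)) → ℝ) (hh : ContDiff ℝ 1 h)
    (x : Fin (n + 2) → EuclideanSpace ℝ (Fin (n + 1)))
    (lam : Fin (n + 2) → ℝ) (hlam0 : ∀ k, 0 ≤ lam k) (hlam1 : ∑ k, lam k = 1)
    (G gb : ℝ)
    (hG : ∀ z ∈ convexHull ℝ (Set.range x),
      ∑ l, |fderiv ℝ h z (EuclideanSpace.single l 1)| ≤ G)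
    (hgb : ∀ k, |g (x k)| ≤ gb) :
    |g (∑ k, lam k • x k) * h (∑ k, lam k • x k) - ∑ k, lam k * (g (x k) * h (x k))| ≤
      G * Metric.diam (convexHull ℝ (Set.range x)) * gb := by
  set S := convexHull ℝ (Set.range x) with hS
  set y := ∑ k, lam k • x k with hy
  have hxk : ∀ k, x k ∈ S := fun k => subset_convexHull ℝ _ ⟨k, rfl⟩
  have hyS : y ∈ S := by
    exact (convex_convexHull ℝ _).sum_mem (fun k _ => hlam0 k) hlam1
      (fun k _ => hxk k)
  -- G nonneg
  have hG0 : 0 ≤ G :=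
    le_trans (Finset.sum_nonneg fun l _ => abs_nonneg _) (hG _ (hxk 0))
  have hgb0 : 0 ≤ gb := le_trans (abs_nonneg _) (hgb 0)
  -- operator norm bound
  have hop : ∀ z ∈ S, ‖fderiv ℝ h z‖ ≤ G := by
    intro z hz
    refine ContinuousLinearMap.opNorm_le_bound _ hG0 fun v => ?_
    have hv : v = ∑ l, v l • EuclideanSpace.single l (1 : ℝ) := by
      ext j
      rw [WithLp.ofLp_sum, Finset.sum_apply (g := fun l => (v l • EuclideanSpace.single l (1:ℝ)).ofLp)]
      simp [EuclideanSpace.single_apply]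
    have hcoord : ∀ l, |v l| ≤ ‖v‖ := by
      intro l
      have := EuclideanSpace.norm_eq v
      have h1 : |v l| = Real.sqrt (‖v l‖ ^ 2) := by
        rw [Real.sqrt_sq_eq_abs]; simp
      rw [h1, this]
      apply Real.sqrt_le_sqrt
      exact Finset.single_le_sum (f := fun i => ‖v i‖ ^ 2)
        (fun i _ => sq_nonneg _) (Finset.mem_univ l)
    calc ‖fderiv ℝ h z v‖ = |∑ l, v l * fderiv ℝ h z (EuclideanSpace.single l 1)| := by
          rw [Real.norm_eq_abs]
          congr 1
          conv_lhs => rw [hv]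
          simp [map_sum]
      _ ≤ ∑ l, |v l * fderiv ℝ h z (EuclideanSpace.single l 1)| :=
          Finset.abs_sum_le_sum_abs _ _
      _ ≤ ∑ l, ‖v‖ * |fderiv ℝ h z (EuclideanSpace.single l 1)| := by
          refine Finset.sum_le_sum fun l _ => ?_
          rw [abs_mul]
          exact mul_le_mul_of_nonneg_right (hcoord l) (abs_nonneg _)
      _ = ‖v‖ * ∑ l, |fderiv ℝ h z (EuclideanSpace.single l 1)| := by
          rw [Finset.mul_sum]
      _ ≤ ‖v‖ * G := mul_le_mul_of_nonneg_left (hG z hz) (norm_nonneg _)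
      _ = G * ‖v‖ := mul_comm _ _
  -- Lipschitz bound on S
  have hlip : ∀ a ∈ S, ∀ b ∈ S, |h a - h b| ≤ G * Metric.diam S := by
    intro a ha b hb
    have := (convex_convexHull ℝ (Set.range x)).norm_image_sub_le_of_norm_fderiv_le
      (f := h) (fun z _ => (hh.differentiable one_ne_zero).differentiableAt) hop hb ha
    rw [Real.norm_eq_abs] at this
    refine this.trans ?_
    refine mul_le_mul_of_nonneg_left ?_ hG0
    rw [← dist_eq_norm]
    exact Metric.dist_le_diam_of_mem
      (((Set.finite_range x).isCompact_convexHull (𝕜 := ℝ)).isBounded) ha hb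
  -- affinity of g
  have hgaff : g y = ∑ k, lam k * g (x k) := by
    have hlin : ∀ p, g p = g.linear p + g 0 := by
      intro p
      have := g.map_vadd 0 p
      simpa [vadd_eq_add, add_comm] using this
    rw [hlin y, hy, map_sum]
    simp only [g.linear.map_smul, smul_eq_mul]
    have : ∑ k, lam k * g (x k) = ∑ k, (lam k * g.linear (x k) + lam k * g 0) := by
      refine Finset.sum_congr rfl fun k _ => ?_
      rw [hlin (x k), mul_add]
    rw [this, Finset.sum_add_distrib, ← Finset.sum_mul, hlam1, one_mul]
  -- main computation
  have key : g y * h y - ∑ k, lam k * (g (x k) * h (x k))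
      = ∑ k, lam k * g (x k) * (h y - h (x k)) := by
    rw [hgaff, Finset.sum_mul]
    rw [← Finset.sum_sub_distrib]
    refine Finset.sum_congr rfl fun k _ => ?_
    ring
  rw [key]
  calc |∑ k, lam k * g (x k) * (h y - h (x k))|
      ≤ ∑ k, |lam k * g (x k) * (h y - h (x k))| := Finset.abs_sum_le_sum_abs _ _
    _ ≤ ∑ k, lam k * (gb * (G * Metric.diam S)) := by
        refine Finset.sum_le_sum fun k _ => ?_
        rw [abs_mul, abs_mul, abs_of_nonneg (hlam0 k), mul_assoc]
        refine mul_le_mul_of_nonneg_left ?_ (hlam0 k)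
        exact mul_le_mul (hgb k) (hlip y hyS (x k) (hxk k)) (abs_nonneg _) hgb0
    _ = G * Metric.diam S * gb := by
        rw [← Finset.sum_mul, hlam1, one_mul]; ring
end
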